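/- arXiv:2206.04986 — 2 statements merged into one kernel-verified Lean document; each statement's English description precedes it below -/
import Mathlib

section
/- With notation as in the minimizing h-curve lemma: if γ is a Lipschitz curve from (x₁,t₁) to (x₂,t₂) and the set {θ ∈ [t₁,t₂] : γ'(θ) ≠ X'(θ)} has positive Lebesgue measure, then ∫_{t₁}^{t₂} f*(γ'(θ))e^{−β(θ)}dθ > ∫_{t₁}^{t₂} f*(X'(θ))e^{−β(θ)}dθ (strict inequality). -/
open Real Set Filter MeasureTheory intervalIntegral

/-- Convex conjugate of `f`. -/
noncomputable def conjFn (f : ℝ → ℝ) (u : ℝ) : ℝ := ⨆ v : ℝ, (u * v - f v)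

/-!
With `v = y₀ e^{β θ}`, Fenchel–Young and its equality case give
`f* u ≥ f* (f' v) + (u - f' v) v`, strictly when `u ≠ f' v`: `v` cannot maximise
`w ↦ u w - f w` unless `u = f' v`. Multiplying by `e^{-β θ}` turns the linear term into
`y₀ (u - X' θ)`, whose integral along `γ'` vanishes because the Lipschitz (hence absolutely
continuous) curve `γ` and `X` have the same endpoints.
-/

section ConvexConjugate

variable {f : ℝ → ℝ}

theorem tendsto_mul_sub_cocompact_atBot
    (hsuper : Tendsto (fun u => f u / |u|) (cocompact ℝ) atTop) (u : ℝ) :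
    Tendsto (fun v => u * v - f v) (cocompact ℝ) atBot := by
  have habs : Tendsto (fun v : ℝ => |v|) (cocompact ℝ) atTop :=
    tendsto_norm_cocompact_atTop.congr Real.norm_eq_abs
  refine tendsto_atBot_mono' _ ?_
    (tendsto_neg_atTop_atBot.comp habs : Tendsto (fun v : ℝ => -|v|) _ _)
  filter_upwards [hsuper.eventually_ge_atTop (|u| + 1), habs.eventually_gt_atTop 0]
    with v hv hv0
  have hfv : (|u| + 1) * |v| ≤ f v := (le_div_iff₀ hv0).1 hv
  show u * v - f v ≤ -|v|
  linarith [abs_mul u v, le_abs_self (u * v)]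

theorem bddAbove_range_mul_sub (hfc : Continuous f)
    (hsuper : Tendsto (fun u => f u / |u|) (cocompact ℝ) atTop) (u : ℝ) :
    BddAbove (range fun v => u * v - f v) := by
  obtain ⟨v₀, hv₀⟩ := (continuous_const.mul continuous_id |>.sub hfc).exists_forall_ge
    (tendsto_mul_sub_cocompact_atBot hsuper u)
  exact ⟨_, forall_mem_range.2 hv₀⟩

theorem mul_sub_le_conjFn (hfc : Continuous f)
    (hsuper : Tendsto (fun u => f u / |u|) (cocompact ℝ) atTop) (u v : ℝ) :
    u * v - f v ≤ conjFn f u :=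
  le_ciSup (bddAbove_range_mul_sub hfc hsuper u) v

theorem convexOn_conjFn (hfc : Continuous f)
    (hsuper : Tendsto (fun u => f u / |u|) (cocompact ℝ) atTop) :
    ConvexOn ℝ univ (conjFn f) := by
  refine ⟨convex_univ, fun x _ y _ a b ha hb hab => ciSup_le fun v => ?_⟩
  have hx := mul_le_mul_of_nonneg_left (mul_sub_le_conjFn hfc hsuper x v) ha
  have hy := mul_le_mul_of_nonneg_left (mul_sub_le_conjFn hfc hsuper y v) hb
  simp only [smul_eq_mul] at hx hy ⊢
  linear_combination hx + hy + f v * hab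

theorem continuous_conjFn (hfc : Continuous f)
    (hsuper : Tendsto (fun u => f u / |u|) (cocompact ℝ) atTop) :
    Continuous (conjFn f) :=
  continuousOn_univ.1 <| (convexOn_conjFn hfc hsuper).continuousOn isOpen_univ

theorem conjFn_deriv (hd : Differentiable ℝ f) (hcv : ConvexOn ℝ univ f)
    (hsuper : Tendsto (fun u => f u / |u|) (cocompact ℝ) atTop) (v : ℝ) :
    conjFn f (deriv f v) = deriv f v * v - f v := by
  refine le_antisymm (ciSup_le fun w => ?_) (mul_sub_le_conjFn hd.continuous hsuper _ v)
  have hmin : IsMinOn (fun w => f w - deriv f v * w) univ v := by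
    refine (hcv.sub ((LinearMap.mul ℝ ℝ (deriv f v)).concaveOn convex_univ))
      |>.isMinOn_of_rightDeriv_eq_zero (by simp) ?_
    have hderiv : HasDerivAt (fun w => f w - deriv f v * w) 0 v :=
      ((hd v).hasDerivAt.sub ((hasDerivAt_id' v).const_mul (deriv f v))).congr_deriv (by ring)
    exact hderiv.hasDerivWithinAt.derivWithin (uniqueDiffWithinAt_Ioi v)
  have htangent : f v - deriv f v * v ≤ f w - deriv f v * w := hmin (mem_univ w)
  linarith

theorem mul_sub_lt_conjFn (hfc : Continuous f)
    (hsuper : Tendsto (fun u => f u / |u|) (cocompact ℝ) atTop) {u v : ℝ}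
    (hv : DifferentiableAt ℝ f v) (huv : u ≠ deriv f v) :
    u * v - f v < conjFn f u := by
  refine (mul_sub_le_conjFn hfc hsuper u v).lt_of_ne fun heq => huv ?_
  have hmax : IsLocalMax (fun w => u * w - f w) v :=
    (IsMaxOn.isLocalMax (s := univ) (fun w _ => heq ▸ mul_sub_le_conjFn hfc hsuper u w)
      univ_mem)
  have hderiv : HasDerivAt (fun w => u * w - f w) (u - deriv f v) v :=
    (((hasDerivAt_id' v).const_mul u).sub hv.hasDerivAt).congr_deriv (by ring)
  exact sub_eq_zero.1 (hmax.hasDerivAt_eq_zero hderiv)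

theorem conjFn_deriv_add_mul_sub_le (hd : Differentiable ℝ f) (hcv : ConvexOn ℝ univ f)
    (hsuper : Tendsto (fun u => f u / |u|) (cocompact ℝ) atTop) (u v : ℝ) :
    conjFn f (deriv f v) + (u - deriv f v) * v ≤ conjFn f u := by
  rw [conjFn_deriv hd hcv hsuper]
  linarith [mul_sub_le_conjFn hd.continuous hsuper u v]

theorem conjFn_deriv_add_mul_sub_lt (hd : Differentiable ℝ f) (hcv : ConvexOn ℝ univ f)
    (hsuper : Tendsto (fun u => f u / |u|) (cocompact ℝ) atTop) {u v : ℝ}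
    (huv : u ≠ deriv f v) :
    conjFn f (deriv f v) + (u - deriv f v) * v < conjFn f u := by
  rw [conjFn_deriv hd hcv hsuper]
  linarith [mul_sub_lt_conjFn hd.continuous hsuper (hd v) huv]

theorem conjFn_deriv_mul_exp_neg_add_le (hd : Differentiable ℝ f) (hcv : ConvexOn ℝ univ f)
    (hsuper : Tendsto (fun u => f u / |u|) (cocompact ℝ) atTop) (y b u : ℝ) :
    conjFn f (deriv f (y * exp b)) * exp (-b) + y * (u - deriv f (y * exp b)) ≤
      conjFn f u * exp (-b) := by
  have h := mul_le_mul_of_nonneg_right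
    (conjFn_deriv_add_mul_sub_le hd hcv hsuper u (y * exp b)) (exp_pos (-b)).le
  rwa [add_mul, mul_assoc, mul_assoc, ← exp_add, add_neg_cancel, exp_zero, mul_one,
    mul_comm (u - _)] at h

theorem conjFn_deriv_mul_exp_neg_add_lt (hd : Differentiable ℝ f) (hcv : ConvexOn ℝ univ f)
    (hsuper : Tendsto (fun u => f u / |u|) (cocompact ℝ) atTop) {y b u : ℝ}
    (hu : u ≠ deriv f (y * exp b)) :
    conjFn f (deriv f (y * exp b)) * exp (-b) + y * (u - deriv f (y * exp b)) <
      conjFn f u * exp (-b) := by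
  have h := mul_lt_mul_of_pos_right (conjFn_deriv_add_mul_sub_lt hd hcv hsuper hu) (exp_pos (-b))
  rwa [add_mul, mul_assoc, mul_assoc, ← exp_add, add_neg_cancel, exp_zero, mul_one,
    mul_comm (u - _)] at h

end ConvexConjugate

theorem LipschitzOnWith.integrableOn_comp_deriv {E : Type*} [NormedAddCommGroup E]
    {γ : ℝ → ℝ} {K : NNReal} {a b : ℝ} (hγ : LipschitzOnWith K γ (Icc a b))
    {φ : ℝ → E} (hφ : Continuous φ) :
    IntegrableOn (fun θ => φ (deriv γ θ)) (Icc a b) := by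
  obtain ⟨C, hC⟩ :=
    (isCompact_closedBall (0 : ℝ) K).exists_bound_of_continuousOn hφ.continuousOn
  rw [integrableOn_Icc_iff_integrableOn_Ioo]
  refine Measure.integrableOn_of_bounded (M := C) measure_Ioo_lt_top.ne
    (hφ.comp_aestronglyMeasurable (measurable_deriv γ).aestronglyMeasurable) ?_
  filter_upwards [ae_restrict_mem measurableSet_Ioo] with θ hθ
  exact hC _ <| mem_closedBall_zero_iff.2 <|
    norm_deriv_le_of_lipschitzOn (Icc_mem_nhds hθ.1 hθ.2) hγ

theorem intervalIntegral_lt_of_le_of_measure_lt_pos {F G : ℝ → ℝ} {a b : ℝ} (hab : a ≤ b)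
    (hF : IntervalIntegrable F volume a b) (hG : IntervalIntegrable G volume a b)
    (hle : ∀ x, F x ≤ G x) (hlt : 0 < volume {x ∈ Icc a b | F x < G x}) :
    ∫ x in a..b, F x < ∫ x in a..b, G x := by
  refine integral_lt_integral_of_ae_le_of_measure_setOfPred_lt_ne_zero hab hF hG
    (ae_of_all _ hle) ?_
  rw [Measure.restrict_apply' measurableSet_Ioc]
  refine (hlt.trans_le ?_).ne'
  calc volume {x ∈ Icc a b | F x < G x}
      = volume ({x ∈ Icc a b | F x < G x} ∩ Icc a b) := by
        rw [inter_eq_left.2 (sep_subset _ _)]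
    _ = volume ({x ∈ Icc a b | F x < G x} ∩ Ioc a b) :=
        measure_congr ((ae_eq_refl _).inter Ioc_ae_eq_Icc.symm)
    _ ≤ volume ({x | F x < G x} ∩ Ioc a b) :=
        measure_mono (inter_subset_inter_left _ fun x hx => hx.2)

/-- Strict minimality of the `h`-curve: if a Lipschitz competitor `γ` with the
same endpoints has `γ' ≠ X'` on a set of positive Lebesgue measure, then its
weighted action is strictly larger than that of the `h`-curve `X`. -/
theorem hcurve_strict_min (f β : ℝ → ℝ)
    (hf : ContDiff ℝ 2 f)
    (hconv : StrictConvexOn ℝ Set.univ f)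
    (hsuper : Tendsto (fun u => f u / |u|) (cocompact ℝ) atTop)
    (hβ : Continuous β)
    (t₁ t₂ x₁ x₂ y₀ : ℝ) (ht : t₁ < t₂)
    (hX : x₁ + ∫ θ in t₁..t₂, deriv f (y₀ * Real.exp (β θ)) = x₂)
    (γ : ℝ → ℝ) (K : NNReal)
    (hγ : LipschitzOnWith K γ (Set.Icc t₁ t₂))
    (hγ1 : γ t₁ = x₁) (hγ2 : γ t₂ = x₂)
    (hdiff : 0 < volume {θ ∈ Set.Icc t₁ t₂ |
      deriv γ θ ≠ deriv f (y₀ * Real.exp (β θ))}) :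
    (∫ θ in t₁..t₂, conjFn f (deriv γ θ) * Real.exp (-β θ)) >
      ∫ θ in t₁..t₂, conjFn f (deriv f (y₀ * Real.exp (β θ))) * Real.exp (-β θ) := by
  have hd : Differentiable ℝ f := hf.differentiable (by norm_num)
  set X' : ℝ → ℝ := fun θ => deriv f (y₀ * exp (β θ))
  have hX'c : Continuous X' := (hf.continuous_deriv one_le_two).comp (by fun_prop)
  have hγ' : LipschitzOnWith K γ (uIcc t₁ t₂) := by rwa [uIcc_of_le ht.le]
  have hI_γ' : IntervalIntegrable (deriv γ) volume t₁ t₂ :=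
    hγ'.absolutelyContinuousOnInterval.intervalIntegrable_deriv
  have hI_X' : IntervalIntegrable X' volume t₁ t₂ := hX'c.intervalIntegrable _ _
  have hsame_ends : ∫ θ in t₁..t₂, (deriv γ θ - X' θ) = 0 := by
    rw [integral_sub hI_γ' hI_X', hγ'.absolutelyContinuousOnInterval.integral_deriv_eq_sub,
      hγ1, hγ2, ← hX]
    ring
  have hI_conjX' : IntervalIntegrable (fun θ => conjFn f (X' θ) * exp (-β θ)) volume t₁ t₂ :=
    ((continuous_conjFn hd.continuous hsuper).comp hX'c |>.mul (by fun_prop)).intervalIntegrable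
      _ _
  have hI_conjγ' :
      IntervalIntegrable (fun θ => conjFn f (deriv γ θ) * exp (-β θ)) volume t₁ t₂ :=
    (intervalIntegrable_iff_integrableOn_Icc_of_le ht.le).2 <|
      (hγ.integrableOn_comp_deriv (continuous_conjFn hd.continuous hsuper)).mul_continuousOn
        (by fun_prop) isCompact_Icc
  have hI_diff := (hI_γ'.sub hI_X').const_mul y₀
  calc ∫ θ in t₁..t₂, conjFn f (X' θ) * exp (-β θ)
      = ∫ θ in t₁..t₂, (conjFn f (X' θ) * exp (-β θ) + y₀ * (deriv γ θ - X' θ)) := by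
        rw [integral_add hI_conjX' hI_diff, intervalIntegral.integral_const_mul, hsame_ends,
          mul_zero, add_zero]
    _ < ∫ θ in t₁..t₂, conjFn f (deriv γ θ) * exp (-β θ) :=
        intervalIntegral_lt_of_le_of_measure_lt_pos ht.le (hI_conjX'.add hI_diff) hI_conjγ'
          (fun θ => conjFn_deriv_mul_exp_neg_add_le hd hconv.convexOn hsuper _ _ _)
          (hdiff.trans_le <| measure_mono fun θ hθ =>
            ⟨hθ.1, conjFn_deriv_mul_exp_neg_add_lt hd hconv.convexOn hsuper hθ.2⟩)
end

section
/- Fundamental identity for the initial functional: for x, y ∈ ℝ, t > τ ≥ 0, ∫_τ^t e^{−β(θ)} f*(f'(h(x−y,t,τ) e^{β(θ)})) dθ = −∫_x^y h(x−z,t,τ) dz − ∫_τ^t e^{−β(θ)} f(h(0,t,τ) e^{β(θ)}) dθ, where h(w,t,τ) denotes the unique h-parameter of the curve traversing horizontal displacement w from time τ to t. -/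
/-!
Write `K p = ∫_τ^t e^{-β θ} f(p e^{β θ}) dθ`. Differentiating under the integral,
`K' p = ∫_τ^t f'(p e^{β θ}) dθ`, so the defining property of `h` says `K' (h w) = w` and hence
`(K ∘ h)' w = w h'(w)`; integrating by parts, `K (h w) - K (h 0) = w h(w) - ∫_0^w h`.
The Fenchel equality `f*(f'(p)) = p f'(p) - f(p)` turns the left-hand side into
`h(w) w - K (h w)` with `w = x - y`, and the substitution `s = x - z` identifies the remaining
integral.
-/

open Real Set Filter intervalIntegral

theorem hasDerivAt_intervalIntegral_of_continuous {E : Type*} [NormedAddCommGroup E]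
    [NormedSpace ℝ E] {F F' : ℝ → ℝ → E} (hF : Continuous F.uncurry)
    (hF' : Continuous F'.uncurry) (h_diff : ∀ x t, HasDerivAt (F · t) (F' x t) x)
    (a b x₀ : ℝ) :
    HasDerivAt (fun x => ∫ t in a..b, F x t) (∫ t in a..b, F' x₀ t) x₀ := by
  obtain ⟨C, hC⟩ := (ProperSpace.isCompact_closedBall x₀ 1).prod (isCompact_uIcc (a := a) (b := b))
    |>.exists_bound_of_continuousOn hF'.continuousOn
  refine (hasDerivAt_integral_of_dominated_loc_of_deriv_le (bound := fun _ => C)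
    (Metric.closedBall_mem_nhds x₀ one_pos)
    (.of_forall fun x => (hF.comp (Continuous.prodMk_right x)).aestronglyMeasurable)
    ((hF.comp (Continuous.prodMk_right x₀)).intervalIntegrable a b)
    (hF'.comp (Continuous.prodMk_right x₀)).aestronglyMeasurable
    (.of_forall fun t ht x hx => hC (x, t) ⟨hx, uIoc_subset_uIcc ht⟩)
    intervalIntegrable_const
    (.of_forall fun t _ x _ => h_diff x t)).2

theorem conjFn_deriv_s13 {f : ℝ → ℝ} (hfd : Differentiable ℝ f) (hconv : ConvexOn ℝ univ f)
    (p : ℝ) : conjFn f (deriv f p) = p * deriv f p - f p := by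
  have key : ∀ v : ℝ, deriv f p * v - f v ≤ p * deriv f p - f p := by
    intro v
    rcases lt_trichotomy v p with hv | rfl | hv
    · have hs := hconv.slope_le_deriv (mem_univ v) (mem_univ p) hv (hfd p)
      rw [slope_def_field, div_le_iff₀ (sub_pos.2 hv)] at hs
      nlinarith
    · linarith [mul_comm v (deriv f v)]
    · have hs := hconv.deriv_le_slope (mem_univ p) (mem_univ v) hv (hfd p)
      rw [slope_def_field, le_div_iff₀ (sub_pos.2 hv)] at hs
      nlinarith
  refine le_antisymm (ciSup_le key) ?_
  calc p * deriv f p - f p = deriv f p * p - f p := by ring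
    _ ≤ _ := le_ciSup ⟨_, forall_mem_range.2 key⟩ p

section

variable {f β : ℝ → ℝ} {a b : ℝ}

theorem hasDerivAt_integral_exp_neg_mul_comp_mul_exp (hf : ContDiff ℝ 1 f) (hβ : Continuous β)
    (p : ℝ) :
    HasDerivAt (fun p => ∫ θ in a..b, exp (-β θ) * f (p * exp (β θ)))
      (∫ θ in a..b, deriv f (p * exp (β θ))) p := by
  have hf' := hf.continuous_deriv le_rfl
  refine hasDerivAt_intervalIntegral_of_continuous
    (F' := fun p θ => deriv f (p * exp (β θ))) (by fun_prop) (by fun_prop) (fun q θ => ?_) a b p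
  have hexp : exp (-β θ) * exp (β θ) = 1 := by rw [← exp_add, neg_add_cancel, exp_zero]
  refine (((hf.differentiable one_ne_zero _).hasDerivAt.comp q
    ((hasDerivAt_id' q).mul_const (exp (β θ)))).const_mul (exp (-β θ))).congr_deriv ?_
  linear_combination deriv f (q * exp (β θ)) * hexp

theorem integral_exp_neg_mul_conjFn_deriv (hf : ContDiff ℝ 1 f) (hconv : ConvexOn ℝ univ f)
    (hβ : Continuous β) (p : ℝ) :
    ∫ θ in a..b, exp (-β θ) * conjFn f (deriv f (p * exp (β θ))) =
      p * (∫ θ in a..b, deriv f (p * exp (β θ))) -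
        ∫ θ in a..b, exp (-β θ) * f (p * exp (β θ)) := by
  have hf' := hf.continuous_deriv le_rfl
  have hexp : ∀ θ, exp (-β θ) * exp (β θ) = 1 := fun θ => by
    rw [← exp_add, neg_add_cancel, exp_zero]
  have hfc := hf.continuous
  rw [← integral_const_mul, ← integral_sub (by apply Continuous.intervalIntegrable; fun_prop)
    (by apply Continuous.intervalIntegrable; fun_prop)]
  refine integral_congr fun θ _ => ?_
  simp only [conjFn_deriv_s13 (hf.differentiable one_ne_zero) hconv]
  linear_combination (p * deriv f (p * exp (β θ))) * hexp θ

theorem integral_exp_neg_mul_comp_sub_eq (hf : ContDiff ℝ 1 f) (hβ : Continuous β) {h : ℝ → ℝ}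
    (hh : ∀ w, w = ∫ θ in a..b, deriv f (h w * exp (β θ))) (hh₁ : ContDiff ℝ 1 h) (w : ℝ) :
    (∫ θ in a..b, exp (-β θ) * f (h w * exp (β θ))) -
        ∫ θ in a..b, exp (-β θ) * f (h 0 * exp (β θ)) =
      w * h w - ∫ s in 0..w, h s := by
  have hh' : Continuous (deriv h) := hh₁.continuous_deriv le_rfl
  have hderiv : ∀ s, HasDerivAt h (deriv h s) s :=
    fun s => (hh₁.differentiable one_ne_zero s).hasDerivAt
  have hG : ∀ s, HasDerivAt (fun s => ∫ θ in a..b, exp (-β θ) * f (h s * exp (β θ)))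
      (s * deriv h s) s := fun s => by
    have hcomp := (hasDerivAt_integral_exp_neg_mul_comp_mul_exp (a := a) (b := b) hf hβ
      (h s)).comp s (hderiv s)
    rwa [← hh s] at hcomp
  rw [← integral_eq_sub_of_hasDerivAt (fun s _ => hG s)
      (by apply Continuous.intervalIntegrable; fun_prop),
    integral_mul_deriv_eq_deriv_mul (fun s _ => hasDerivAt_id' s) (fun s _ => hderiv s)
      intervalIntegrable_const (by apply Continuous.intervalIntegrable; fun_prop)]
  simp

end

theorem initial_functional_identity_general (f β h : ℝ → ℝ)
    (hf : ContDiff ℝ 2 f)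
    (hconv : StrictConvexOn ℝ Set.univ f)
    (hβ : Continuous β)
    (x y t τ : ℝ)
    (hh : ∀ w : ℝ, w = ∫ θ in τ..t, deriv f (h w * Real.exp (β θ)))
    (hhC1 : ContDiff ℝ 1 h) :
    (∫ θ in τ..t,
      Real.exp (-β θ) * conjFn f (deriv f (h (x - y) * Real.exp (β θ)))) =
      -(∫ z in x..y, h (x - z)) -
        ∫ θ in τ..t, Real.exp (-β θ) * f (h 0 * Real.exp (β θ)) := by
  have hf₁ : ContDiff ℝ 1 f := hf.of_le one_le_two
  rw [integral_exp_neg_mul_conjFn_deriv hf₁ hconv.convexOn hβ, ← hh,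
    integral_comp_sub_left h x, sub_self, integral_symm 0 (x - y)]
  linarith [integral_exp_neg_mul_comp_sub_eq hf₁ hβ hh hhC1 (x - y)]

/-- Fundamental identity for the initial functional: with `h w` the `h`-curve
parameter for displacement `w` between times `τ` and `t`,
`∫_τ^t e^{-β θ} f*(f'(h(x-y) e^{β θ})) dθ
  = -∫_x^y h(x-z) dz - ∫_τ^t e^{-β θ} f(h(0) e^{β θ}) dθ`. -/
theorem initial_functional_identity (f β h : ℝ → ℝ)
    (hf : ContDiff ℝ 2 f)
    (hconv : StrictConvexOn ℝ Set.univ f)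
    (hsuper : Tendsto (fun u => f u / |u|) (cocompact ℝ) atTop)
    (hβ : Continuous β)
    (x y t τ : ℝ) (hτ : 0 ≤ τ) (ht : τ < t)
    (hh : ∀ w : ℝ, w = ∫ θ in τ..t, deriv f (h w * Real.exp (β θ)))
    (hhC1 : ContDiff ℝ 1 h) :
    (∫ θ in τ..t,
      Real.exp (-β θ) * conjFn f (deriv f (h (x - y) * Real.exp (β θ)))) =
      -(∫ z in x..y, h (x - z)) -
        ∫ θ in τ..t, Real.exp (-β θ) * f (h 0 * Real.exp (β θ)) :=
  initial_functional_identity_general f β h hf hconv hβ x y t τ hh hhC1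
end
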